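/- Assume conditions (A1) and (A3), and let g : X → ℝ be bounded and Lipschitz. Let K ⊂ X be a compact set and T ∈ (0,∞). Then for every ε > 0 there exists δ > 0 such that sup_{x∈K} ∫_X ∫_X (g(u) − g(v))² P_{|t−s|}(u,dv) P_{s∧t}(x,du) < ε for all s,t ∈ [0,T] with |s−t| < δ (the double integral equals E_x[(g(Φ_s) − g(Φ_t))²] for the associated Markov process started at x). -/

import Mathlib

open MeasureTheory Filter Set
open scoped ENNReal Topology NNReal

noncomputable section

variable {X : Type*} [MetricSpace X] [CompleteSpace X] [SecondCountableTopology X]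
  [MeasurableSpace X] [BorelSpace X]

/-- Action of a transition kernel family on measures: `ν ↦ ν P_t`. -/
def measAct (P : ℝ → X → Measure X) (t : ℝ) (ν : Measure X) : Measure X :=
  ν.bind (P t)

/-- Dual action of the semigroup on functions: `f ↦ P_t f`. -/
def funAct (P : ℝ → X → Measure X) (t : ℝ) (f : X → ℝ) (x : X) : ℝ :=
  ∫ y, f y ∂(P t x)

/-- A Borel (probability) measure has a finite first moment. -/
def FiniteFirstMoment (ν : Measure X) : Prop :=
  ∀ x₀ : X, Integrable (fun x => dist x₀ x) ν

/-- The Wasserstein (Kantorovich–Rubinstein) distance `d_W`. -/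
def wassDist (μ ν : Measure X) : ℝ :=
  sSup {r | ∃ f : X → ℝ, LipschitzWith 1 f ∧ r = |(∫ x, f x ∂μ) - ∫ x, f x ∂ν|}

/-- A Markov semigroup `{P_t}_{t ≥ 0}` of probability kernels on `X`. -/
structure IsMarkovSemigroup (P : ℝ → X → Measure X) : Prop where
  prob : ∀ t, 0 ≤ t → ∀ x, IsProbabilityMeasure (P t x)
  jointMeas : ∀ A : Set X, MeasurableSet A → Measurable fun p : ℝ × X => P p.1 p.2 A
  init : ∀ x, P 0 x = Measure.dirac x
  chapman : ∀ s t, 0 ≤ s → 0 ≤ t → ∀ x, P (s + t) x = (P s x).bind (P t)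

/-- Condition (A1): stochastic continuity of the semigroup. -/
def CondA1 (P : ℝ → X → Measure X) : Prop :=
  ∀ f : X → ℝ, Continuous f → (∃ C, ∀ x, |f x| ≤ C) →
    ∀ x : X, Tendsto (fun t => funAct P t f x) (𝓝[>] (0 : ℝ)) (𝓝 (f x))

/-- Condition (A2): the Feller property. -/
def CondA2 (P : ℝ → X → Measure X) : Prop :=
  ∀ f : X → ℝ, Continuous f → (∃ C, ∀ x, |f x| ≤ C) → ∀ t, 0 ≤ t →
    Continuous (funAct P t f) ∧ ∃ C, ∀ x, |funAct P t f x| ≤ C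

/-- Condition (A3): preservation of finite first moments and exponential
contractivity in the Wasserstein distance, with rate `γ`. -/
def CondA3 (P : ℝ → X → Measure X) (γ : ℝ) : Prop :=
  (∀ ν : Measure X, IsProbabilityMeasure ν → FiniteFirstMoment ν →
    ∀ t, 0 < t → FiniteFirstMoment (measAct P t ν)) ∧
  0 < γ ∧
  ∀ t, 0 ≤ t → ∀ x y : X,
    wassDist (P t x) (P t y) ≤ Real.exp (-γ * t) * dist x y

/-- Condition (A4): a uniform-in-time moment bound of order `ζ > 2` for the initial
distribution `μ`, along the semigroup. -/
def CondA4 (P : ℝ → X → Measure X) (μ : Measure X) (x₀ : X) (ζ : ℝ) : Prop :=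
  2 < ζ ∧ ∃ M : ℝ, ∀ t, 0 ≤ t →
    (∫⁻ x, ENNReal.ofReal (dist x₀ x ^ ζ) ∂(measAct P t μ)) ≤ ENNReal.ofReal M

variable {Ω : Type*} [MeasurableSpace Ω]

/-- The natural filtration of the process `Φ`. -/
def natFiltration (Φ : ℝ → Ω → X) (s : ℝ) : MeasurableSpace Ω :=
  ⨆ u ∈ Set.Icc (0 : ℝ) s, MeasurableSpace.comap (Φ u) inferInstance

/-- A (progressively measurable) time-homogeneous Markov process with state space `X`,
transition semigroup `P` and initial distribution `μ`, realized on `(Ω, ℙ)`. -/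
structure IsMarkovProcess (P : ℝ → X → Measure X) (Φ : ℝ → Ω → X)
    (ℙ : Measure Ω) (μ : Measure X) : Prop where
  jointMeas : Measurable fun p : ℝ × Ω => Φ p.1 p.2
  init : ℙ.map (Φ 0) = μ
  law : ∀ t, 0 ≤ t → ℙ.map (Φ t) = measAct P t μ
  markov : ∀ f : X → ℝ, Measurable f → (∃ C, ∀ x, |f x| ≤ C) →
    ∀ s t : ℝ, 0 ≤ s → 0 ≤ t →
      (fun ω => funAct P t f (Φ s ω)) =ᵐ[ℙ]
        ℙ[(fun ω => f (Φ (s + t) ω)) | natFiltration Φ s]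

/-- A Markov process together with a measurable family of laws `{ℙ_x}_{x ∈ X}`,
with `ℙ_x(Φ_0 = x) = 1`. -/
structure IsMarkovFamily (P : ℝ → X → Measure X) (Φ : ℝ → Ω → X)
    (ℙ : X → Measure Ω) : Prop where
  prob : ∀ x, IsProbabilityMeasure (ℙ x)
  jointMeas : Measurable fun p : ℝ × Ω => Φ p.1 p.2
  measFam : ∀ s : Set Ω, MeasurableSet s → Measurable fun x => ℙ x s
  start : ∀ x, (ℙ x) {ω | Φ 0 ω = x} = 1
  law : ∀ x, ∀ t, 0 ≤ t → (ℙ x).map (Φ t) = P t x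
  markov : ∀ x : X, ∀ f : X → ℝ, Measurable f → (∃ C, ∀ z, |f z| ≤ C) →
    ∀ s t : ℝ, 0 ≤ s → 0 ≤ t →
      (fun ω => funAct P t f (Φ s ω)) =ᵐ[ℙ x]
        (ℙ x)[(fun ω => f (Φ (s + t) ω)) | natFiltration Φ s]

/-- The corrector function `χ_g(x) = ∫_0^∞ (P_t g)(x) dt`. -/
def corrector (P : ℝ → X → Measure X) (g : X → ℝ) (x : X) : ℝ :=
  ∫ t in Set.Ioi (0 : ℝ), funAct P t g x

/-- The additive functional `I_t(g) = ∫_0^t g(Φ_s) ds`. -/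
def addFun (g : X → ℝ) (Φ : ℝ → Ω → X) (t : ℝ) (ω : Ω) : ℝ :=
  ∫ s in (0 : ℝ)..t, g (Φ s ω)

/-- The martingale part `M_t(g) = χ_g(Φ_t) - χ_g(Φ_0) + I_t(g)`. -/
def mart (P : ℝ → X → Measure X) (g : X → ℝ) (Φ : ℝ → Ω → X) (t : ℝ) (ω : Ω) : ℝ :=
  corrector P g (Φ t ω) - corrector P g (Φ 0 ω) + addFun g Φ t ω

/-- The martingale increments `Z_n(g) = M_n(g) - M_{n-1}(g)`. -/
def incr (P : ℝ → X → Measure X) (g : X → ℝ) (Φ : ℝ → Ω → X) (n : ℕ) (ω : Ω) : ℝ :=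
  mart P g Φ (n : ℝ) ω - mart P g Φ ((n : ℝ) - 1) ω

/-- Truncation `a ∧ p` for `p ∈ ℕ ∪ {∞}`, with the convention `a ∧ ∞ = a`. -/
def truncMin (a : ℝ) (p : ℕ∞) : ℝ :=
  if p = ⊤ then a else min a (p.toNat : ℝ)

/-! The integrand is `P_{s ∧ t} h_r (x)` with `r = |t - s|` and
`h_r u = ∫ (g u - g v)² P_r(u, dv)`. By (A1), `h_r → 0` pointwise as `r → 0⁺`, hence
`P_s h_r (x) → 0` for every `(x, s)` by dominated convergence. By (A3) each `P_a` preserves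
Lipschitz constants, so all the functions `P_a h_r` lie in one bounded Lipschitz ball, on which
the stochastic continuity (A1) holds uniformly. This makes the family `(x, s) ↦ P_s h_r (x)`
equicontinuous, and by Ascoli the pointwise convergence is uniform on the compact `K × [0, T]`. -/

open ProbabilityTheory

theorem tendstoUniformlyOn_of_equicontinuousOn {ι Z α : Type*} [TopologicalSpace Z]
    [UniformSpace α] {F : ι → Z → α} {f : Z → α} {l : Filter ι} {I : Set ι} {S : Set Z}
    (hI : I ∈ l) (hS : IsCompact S) (hF : EquicontinuousOn (fun i : I => F i) S)
    (h : ∀ y ∈ S, Tendsto (F · y) l (𝓝 (f y))) : TendstoUniformlyOn F f l S := by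
  have hpi : Tendsto ((⋃₀ {S}).domRestrict ∘ fun i : I => F i) (comap (↑) l)
      (𝓝 ((⋃₀ {S}).domRestrict f)) := by
    rw [tendsto_pi_nhds]
    rintro ⟨y, hy⟩
    exact (h y (by simpa using hy)).comp tendsto_comap
  have hunif := (EquicontinuousOn.tendsto_uniformOnFun_iff_pi' (by simpa using hS)
    (by simpa using hF) _ f).mpr hpi
  intro u hu
  have hev := (UniformOnFun.tendsto_iff_tendstoUniformlyOn.mp hunif S rfl) u hu
  rw [eventually_comap] at hev
  filter_upwards [hev, hI] with i hi hiI using hi ⟨i, hiI⟩ rfl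

section Wasserstein

variable {Y : Type*} [MetricSpace Y] [MeasurableSpace Y] [OpensMeasurableSpace Y]

lemma FiniteFirstMoment.integrable_of_lipschitzWith {μ : Measure Y} [IsFiniteMeasure μ]
    (hμ : FiniteFirstMoment μ) {K : ℝ≥0} {f : Y → ℝ} (hf : LipschitzWith K f) :
    Integrable f μ := by
  rcases isEmpty_or_nonempty Y with hY | ⟨⟨x₀⟩⟩
  · rw [Measure.eq_zero_of_isEmpty μ]
    exact integrable_zero_measure
  refine Integrable.mono' ((integrable_const |f x₀|).add ((hμ x₀).const_mul K))
    hf.continuous.aestronglyMeasurable (ae_of_all _ fun z => ?_)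
  have hz : |f z - f x₀| ≤ K * dist x₀ z := by
    simpa [Real.dist_eq, dist_comm z] using hf.dist_le_mul z x₀
  show |f z| ≤ |f x₀| + K * dist x₀ z
  linarith [abs_sub_abs_le_abs_sub (f z) (f x₀)]

lemma abs_integral_sub_le_wassDist {μ ν : Measure Y} [IsProbabilityMeasure μ]
    [IsProbabilityMeasure ν] (hμ : FiniteFirstMoment μ) (hν : FiniteFirstMoment ν)
    {f : Y → ℝ} (hf : LipschitzWith 1 f) :
    |(∫ x, f x ∂μ) - ∫ x, f x ∂ν| ≤ wassDist μ ν := by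
  obtain ⟨x₀⟩ := nonempty_of_isProbabilityMeasure μ
  have hdev : ∀ (m : Measure Y) [IsProbabilityMeasure m], FiniteFirstMoment m →
      ∀ h : Y → ℝ, LipschitzWith 1 h → |(∫ x, h x ∂m) - h x₀| ≤ ∫ x, dist x₀ x ∂m := by
    intro m _ hm h hh
    have hint := hm.integrable_of_lipschitzWith hh
    calc |(∫ x, h x ∂m) - h x₀| = |∫ x, (h x - h x₀) ∂m| := by
          rw [integral_sub hint (integrable_const _)]; simp
      _ ≤ ∫ x, |h x - h x₀| ∂m := abs_integral_le_integral_abs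
      _ ≤ ∫ x, dist x₀ x ∂m := integral_mono (hint.sub (integrable_const _)).abs (hm x₀)
          fun x => by simpa [Real.dist_eq, dist_comm, abs_sub_comm] using hh.dist_le_mul x x₀
  refine le_csSup ⟨(∫ x, dist x₀ x ∂μ) + ∫ x, dist x₀ x ∂ν, ?_⟩ ⟨f, hf, rfl⟩
  rintro r ⟨h, hh, rfl⟩
  have h1 := hdev μ hμ h hh
  have h2 := hdev ν hν h hh
  calc |(∫ x, h x ∂μ) - ∫ x, h x ∂ν|
      = |((∫ x, h x ∂μ) - h x₀) - ((∫ x, h x ∂ν) - h x₀)| := by ring_nf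
    _ ≤ _ := (abs_sub _ _).trans (add_le_add h1 h2)

end Wasserstein

section MarkovSemigroup

variable {Y : Type*} [MeasurableSpace Y] {P : ℝ → Y → Measure Y}

namespace IsMarkovSemigroup

theorem measurable (hP : IsMarkovSemigroup P) (t : ℝ) : Measurable (P t) :=
  Measure.measurable_of_measurable_coe _ fun A hA =>
    (hP.jointMeas A hA).comp (measurable_const.prodMk measurable_id)

theorem funAct_add (hP : IsMarkovSemigroup P) {s t : ℝ} (hs : 0 ≤ s) (ht : 0 ≤ t) {f : Y → ℝ}
    {x : Y} (hf : Integrable f (P (s + t) x)) :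
    funAct P (s + t) f x = funAct P s (funAct P t f) x := by
  let κ : Kernel Y Y := ⟨P s, hP.measurable s⟩
  let η : Kernel Y Y := ⟨P t, hP.measurable t⟩
  have hcomp : (η ∘ₖ κ) x = P (s + t) x := by
    rw [Kernel.comp_apply, hP.chapman s t hs ht x]; rfl
  rw [← hcomp] at hf
  simp only [funAct, ← hcomp, Kernel.integral_comp hf]
  rfl

theorem abs_funAct_le (hP : IsMarkovSemigroup P) {t : ℝ} (ht : 0 ≤ t) {f : Y → ℝ} {B : ℝ}
    (hB : ∀ y, |f y| ≤ B) (x : Y) : |funAct P t f x| ≤ B := by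
  have := hP.prob t ht x
  simpa [funAct] using
    norm_integral_le_of_norm_le_const (μ := P t x) (f := f) (C := B) (ae_of_all _ hB)

variable [MetricSpace Y] [OpensMeasurableSpace Y] {γ : ℝ}

theorem funAct_zero (hP : IsMarkovSemigroup P) (f : Y → ℝ) (x : Y) :
    funAct P 0 f x = f x := by
  rw [funAct, hP.init, integral_dirac]

theorem tendsto_funAct_nhdsGE (hP : IsMarkovSemigroup P) (hA1 : CondA1 P) {f : Y → ℝ}
    (hf : Continuous f) (hB : ∃ C, ∀ y, |f y| ≤ C) (x : Y) :
    Tendsto (fun t => funAct P t f x) (𝓝[≥] 0) (𝓝 (f x)) := by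
  rw [← nhdsGT_sup_nhdsWithin_singleton, nhdsWithin_singleton, tendsto_sup, tendsto_pure_left]
  exact ⟨hA1 f hf hB x, fun _ h => by rw [hP.funAct_zero]; exact mem_of_mem_nhds h⟩

theorem finiteFirstMoment (hP : IsMarkovSemigroup P) (hA3 : CondA3 P γ) {t : ℝ} (ht : 0 ≤ t)
    (x : Y) : FiniteFirstMoment (P t x) := by
  have hδ : FiniteFirstMoment (Measure.dirac x) := fun x₀ => integrable_dirac (by simp)
  rcases ht.eq_or_lt with rfl | ht
  · rwa [hP.init]
  · simpa [measAct, Measure.dirac_bind (hP.measurable t)] using hA3.1 _ inferInstance hδ t ht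

theorem lipschitzWith_funAct (hP : IsMarkovSemigroup P) (hA3 : CondA3 P γ) {t : ℝ}
    (ht : 0 ≤ t) {K : ℝ≥0} {f : Y → ℝ} (hf : LipschitzWith K f) :
    LipschitzWith K (funAct P t f) := by
  refine LipschitzWith.of_dist_le_mul fun x y => ?_
  have := hP.prob t ht x
  have := hP.prob t ht y
  rcases eq_or_ne K 0 with rfl | hK
  · have hc : ∀ z, f z = f x := fun z => by simpa using hf.dist_le_mul z x
    simp [funAct, hc]
  have hf₁ : LipschitzWith 1 fun z => (K : ℝ)⁻¹ * f z := by
    have h := (lipschitzWith_smul (K : ℝ)⁻¹).comp hf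
    rw [nnnorm_inv, NNReal.nnnorm_eq, inv_mul_cancel₀ hK] at h
    exact h
  have hW := abs_integral_sub_le_wassDist (hP.finiteFirstMoment hA3 ht x)
    (hP.finiteFirstMoment hA3 ht y) hf₁
  have hexp : Real.exp (-γ * t) ≤ 1 := Real.exp_le_one_iff.mpr (by nlinarith [hA3.2.1])
  have hd := (hA3.2.2 t ht x y).trans (mul_le_of_le_one_left dist_nonneg hexp)
  rw [integral_const_mul, integral_const_mul, ← mul_sub, abs_mul, abs_inv, NNReal.abs_eq,
    inv_mul_le_iff₀ (by positivity)] at hW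
  rw [Real.dist_eq]
  exact hW.trans (by gcongr)

theorem eventually_abs_funAct_sub_lt (hP : IsMarkovSemigroup P) (hA1 : CondA1 P) (K : ℝ≥0)
    (B : ℝ) (x : Y) {ε : ℝ} (hε : 0 < ε) :
    ∀ᶠ t in 𝓝[≥] 0, ∀ f : Y → ℝ, LipschitzWith K f → (∀ y, |f y| ≤ B) →
      |funAct P t f x - f x| < ε := by
  -- a modulus of continuity at `x` shared by the whole ball
  set m : Y → ℝ := fun y => min (K * dist x y) (2 * |B|)
  have hm : Continuous m := by fun_prop
  have hmB : ∀ y, |m y| ≤ 2 * |B| := fun y => by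
    rw [abs_of_nonneg (by positivity)]; exact min_le_right _ _
  have hlim := hP.tendsto_funAct_nhdsGE hA1 hm ⟨_, hmB⟩ x
  have hmx : m x = 0 := by simp [m]
  rw [hmx] at hlim
  filter_upwards [hlim.eventually (gt_mem_nhds hε), self_mem_nhdsWithin]
    with t hmt (ht : 0 ≤ t) f hf hfB
  have := hP.prob t ht x
  have hint : Integrable f (P t x) :=
    Integrable.of_bound hf.continuous.aestronglyMeasurable B (ae_of_all _ hfB)
  calc |funAct P t f x - f x| = |∫ y, (f y - f x) ∂(P t x)| := by
        rw [integral_sub hint (integrable_const _)]; simp [funAct]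
    _ ≤ ∫ y, |f y - f x| ∂(P t x) := abs_integral_le_integral_abs
    _ ≤ funAct P t m x := by
        refine integral_mono (hint.sub (integrable_const _)).abs
          (Integrable.of_bound hm.aestronglyMeasurable _ (ae_of_all _ hmB)) fun y => ?_
        refine le_min ?_ ?_
        · simpa [Real.dist_eq, dist_comm, abs_sub_comm] using hf.dist_le_mul y x
        · linarith [abs_sub (f y) (f x), hfB x, hfB y, le_abs_self B]
    _ < ε := hmt

theorem equicontinuousOn_funAct (hP : IsMarkovSemigroup P) (hA1 : CondA1 P)
    (hA3 : CondA3 P γ) {ι : Type*} {f : ι → Y → ℝ} {K : ℝ≥0} {B : ℝ}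
    (hf : ∀ i, LipschitzWith K (f i)) (hB : ∀ i y, |f i y| ≤ B) {S : Set (Y × ℝ)}
    (hS : ∀ p ∈ S, 0 ≤ p.2) :
    EquicontinuousOn (fun i (p : Y × ℝ) => funAct P p.2 (f i) p.1) S := by
  rintro ⟨x, s⟩ hxs
  rw [Metric.uniformity_basis_dist.equicontinuousWithinAt_iff_right]
  intro ε hε
  -- `P_{e+a} f = P_e (P_a f)`, and `P_a f` lies in the same Lipschitz ball as `f`
  have hshift : ∀ a e, 0 ≤ a → 0 ≤ e →
      (∀ g : Y → ℝ, LipschitzWith K g → (∀ y, |g y| ≤ B) → |funAct P e g x - g x| < ε / 2) →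
      ∀ i, |funAct P (e + a) (f i) x - funAct P a (f i) x| < ε / 2 := by
    intro a e ha he hgood i
    have := hP.prob (e + a) (add_nonneg he ha) x
    rw [hP.funAct_add he ha (Integrable.of_bound (hf i).continuous.aestronglyMeasurable B
      (ae_of_all _ (hB i)))]
    exact hgood _ (hP.lipschitzWith_funAct hA3 ha (hf i)) (hP.abs_funAct_le ha (hB i))
  have htime : ∀ᶠ q in 𝓝[S] (x, s), ∀ i,
      |funAct P q.2 (f i) x - funAct P s (f i) x| < ε / 2 := by
    have hlim : Tendsto (fun q : Y × ℝ => |q.2 - s|) (𝓝[S] (x, s)) (𝓝[≥] 0) := by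
      refine tendsto_nhdsWithin_iff.mpr
        ⟨?_, Eventually.of_forall fun q => mem_Ici.2 (abs_nonneg _)⟩
      have : Continuous fun q : Y × ℝ => |q.2 - s| := by fun_prop
      simpa using (this.continuousWithinAt (s := S) (x := (x, s))).tendsto
    filter_upwards [hlim.eventually (hP.eventually_abs_funAct_sub_lt hA1 K B x (half_pos hε)),
      self_mem_nhdsWithin] with ⟨x', s'⟩ hgood hq i
    rcases le_total s s' with h | h
    · have := hshift s (s' - s) (hS _ hxs) (sub_nonneg.2 h)
        (by rwa [abs_of_nonneg (sub_nonneg.2 h)] at hgood) i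
      rwa [sub_add_cancel] at this
    · have := hshift s' (s - s') (hS _ hq) (sub_nonneg.2 h)
        (by rwa [abs_sub_comm, abs_of_nonneg (sub_nonneg.2 h)] at hgood) i
      rwa [sub_add_cancel, abs_sub_comm] at this
  have hspace : ∀ᶠ q in 𝓝[S] (x, s), K * dist q.1 x < ε / 2 := by
    have : Continuous fun q : Y × ℝ => K * dist q.1 x := by fun_prop
    exact (this.continuousWithinAt (s := S) (x := (x, s))).eventually
      (gt_mem_nhds (by simpa using half_pos hε))
  filter_upwards [htime, hspace, self_mem_nhdsWithin] with ⟨x', s'⟩ htime hspace hq i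
  have hlip := (hP.lipschitzWith_funAct hA3 (hS _ hq) (hf i)).dist_le_mul x' x
  calc dist (funAct P s (f i) x) (funAct P s' (f i) x')
      ≤ dist (funAct P s (f i) x) (funAct P s' (f i) x) +
        dist (funAct P s' (f i) x) (funAct P s' (f i) x') := dist_triangle _ _ _
    _ < ε / 2 + ε / 2 := by
        rw [Real.dist_eq, abs_sub_comm, dist_comm (funAct P s' (f i) x)]
        exact add_lt_add (htime i) (hlip.trans_lt hspace)
    _ = ε := add_halves ε

end IsMarkovSemigroup

end MarkovSemigroup

theorem LipschitzWith.sq {Z : Type*} [PseudoMetricSpace Z] {h : Z → ℝ} {K M : ℝ≥0}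
    (hh : LipschitzWith K h) (hM : ∀ z, |h z| ≤ M) :
    LipschitzWith (2 * M * K) fun z => h z ^ 2 := by
  refine LipschitzWith.of_dist_le_mul fun x y => ?_
  have h₁ : |h x + h y| ≤ 2 * M := (abs_add_le _ _).trans (by linarith [hM x, hM y])
  have h₂ : |h x - h y| ≤ K * dist x y := by simpa [Real.dist_eq] using hh.dist_le_mul x y
  rw [Real.dist_eq, sq_sub_sq, abs_mul]
  calc |h x + h y| * |h x - h y| ≤ (2 * M) * (K * dist x y) :=
        mul_le_mul h₁ h₂ (abs_nonneg _) (by positivity)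
    _ = ↑(2 * M * K) * dist x y := by push_cast; ring

section Diagonal

variable {Y : Type*} [MetricSpace Y] [MeasurableSpace Y] [OpensMeasurableSpace Y]
  {P : ℝ → Y → Measure Y} {γ : ℝ} {φ : Y → Y → ℝ}

def funActDiag (P : ℝ → Y → Measure Y) (φ : Y → Y → ℝ) (r : ℝ) (u : Y) : ℝ :=
  funAct P r (φ u) u

namespace IsMarkovSemigroup

theorem lipschitzWith_funActDiag (hP : IsMarkovSemigroup P) (hA3 : CondA3 P γ) {r : ℝ}
    (hr : 0 ≤ r) {K : ℝ≥0} (hφ : ∀ u, LipschitzWith K (φ u))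
    (hφ' : ∀ v, LipschitzWith K (φ · v)) : LipschitzWith (2 * K) (funActDiag P φ r) := by
  refine LipschitzWith.of_dist_le_mul fun u u' => ?_
  have := hP.prob r hr u'
  have hμ := hP.finiteFirstMoment hA3 hr u'
  have hint := fun w => hμ.integrable_of_lipschitzWith (hφ w)
  have hcross : dist (funAct P r (φ u) u') (funAct P r (φ u') u') ≤ K * dist u u' := by
    rw [Real.dist_eq, funAct, funAct, ← integral_sub (hint u) (hint u')]
    calc |∫ v, (φ u v - φ u' v) ∂(P r u')| ≤ ∫ v, |φ u v - φ u' v| ∂(P r u') :=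
          abs_integral_le_integral_abs
      _ ≤ ∫ _, K * dist u u' ∂(P r u') :=
          integral_mono ((hint u).sub (hint u')).abs (integrable_const _) fun v => by
            simpa [Real.dist_eq] using (hφ' v).dist_le_mul u u'
      _ = K * dist u u' := by simp
  calc dist (funActDiag P φ r u) (funActDiag P φ r u')
      ≤ dist (funAct P r (φ u) u) (funAct P r (φ u) u') +
        dist (funAct P r (φ u) u') (funAct P r (φ u') u') := dist_triangle _ _ _
    _ ≤ K * dist u u' + K * dist u u' :=
        add_le_add ((hP.lipschitzWith_funAct hA3 hr (hφ u)).dist_le_mul u u') hcross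
    _ = ↑(2 * K) * dist u u' := by push_cast; ring

theorem tendstoUniformlyOn_funAct_funActDiag (hP : IsMarkovSemigroup P) (hA1 : CondA1 P)
    (hA3 : CondA3 P γ) {K : ℝ≥0} {B : ℝ} (hφ : ∀ u, LipschitzWith K (φ u))
    (hφ' : ∀ v, LipschitzWith K (φ · v)) (hB : ∀ u v, |φ u v| ≤ B) (hdiag : ∀ u, φ u u = 0)
    {S : Set (Y × ℝ)} (hS : IsCompact S) (hS0 : ∀ p ∈ S, 0 ≤ p.2) :
    TendstoUniformlyOn (fun r (p : Y × ℝ) => funAct P p.2 (funActDiag P φ r) p.1) 0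
      (𝓝[≥] 0) S := by
  refine tendstoUniformlyOn_of_equicontinuousOn self_mem_nhdsWithin hS
    (hP.equicontinuousOn_funAct hA1 hA3
      (fun r : Ici (0 : ℝ) => hP.lipschitzWith_funActDiag hA3 r.2 hφ hφ')
      (fun r u => hP.abs_funAct_le r.2 (hB u) u) hS0) fun p hp => ?_
  have := hP.prob p.2 (hS0 p hp) p.1
  have hlim : ∀ u, Tendsto (fun r => funActDiag P φ r u) (𝓝[≥] 0) (𝓝 0) := fun u => by
    simpa [funActDiag, hdiag] using
      hP.tendsto_funAct_nhdsGE hA1 (hφ u).continuous ⟨B, hB u⟩ u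
  have hnonneg : ∀ᶠ r in 𝓝[≥] (0 : ℝ), 0 ≤ r := self_mem_nhdsWithin
  simpa [funAct] using tendsto_integral_filter_of_dominated_convergence (fun _ => B)
    (hnonneg.mono fun r hr =>
      (hP.lipschitzWith_funActDiag hA3 hr hφ hφ').continuous.aestronglyMeasurable)
    (hnonneg.mono fun r hr => ae_of_all _ fun u => hP.abs_funAct_le hr (hB u) u)
    (integrable_const B) (ae_of_all _ hlim)

end IsMarkovSemigroup

end Diagonal

theorem uniform_mean_square_continuity_on_compacts_general
    (P : ℝ → X → Measure X) (hP : IsMarkovSemigroup P)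
    (γ : ℝ) (hA1 : CondA1 P) (hA3 : CondA3 P γ)
    (g : X → ℝ) (Kg : ℝ≥0) (hLip : LipschitzWith Kg g) (hBd : ∃ C, ∀ x, |g x| ≤ C)
    (K : Set X) (hK : IsCompact K) (T : ℝ) :
    ∀ ε : ℝ, 0 < ε → ∃ δ : ℝ, 0 < δ ∧
      ∀ s t : ℝ, s ∈ Set.Icc (0 : ℝ) T → t ∈ Set.Icc (0 : ℝ) T → |s - t| < δ →
        ∀ x ∈ K,
          (∫ u, (∫ v, (g u - g v) ^ 2 ∂(P |t - s| u)) ∂(P (min s t) x)) < ε := by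
  intro ε hε
  obtain ⟨C, hC⟩ := hBd
  set M : ℝ≥0 := 2 * C.toNNReal
  have hincr : ∀ u v, |g u - g v| ≤ M := fun u v => by
    simp only [M, NNReal.coe_mul, NNReal.coe_ofNat]
    linarith [abs_sub (g u) (g v), hC u, hC v, C.le_coe_toNNReal]
  have hsq : ∀ u, LipschitzWith (2 * M * Kg) fun v => (g u - g v) ^ 2 := fun u =>
    (by simpa using (LipschitzWith.const (g u)).sub hLip : LipschitzWith Kg _).sq (hincr u)
  have hsqB : ∀ u v, |(g u - g v) ^ 2| ≤ (M : ℝ) ^ 2 := fun u v => by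
    rw [abs_sq, ← sq_abs]
    exact pow_le_pow_left₀ (abs_nonneg _) (hincr u v) 2
  have hunif := hP.tendstoUniformlyOn_funAct_funActDiag hA1 hA3 hsq
    (fun v => by simpa only [sub_sq_comm (g v)] using hsq v) hsqB (fun u => by simp)
    (S := K ×ˢ Icc 0 T) (hK.prod isCompact_Icc) fun p hp => hp.2.1
  obtain ⟨δ, hδ, hsmall⟩ :=
    mem_nhdsGE_iff_exists_Ico_subset.mp (Metric.tendstoUniformlyOn_iff.mp hunif ε hε)
  refine ⟨δ, hδ, fun s t hs ht hst x hx => ?_⟩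
  have := hsmall ⟨abs_nonneg (t - s), by rwa [abs_sub_comm]⟩ (x, min s t)
    ⟨hx, le_min hs.1 ht.1, (min_le_left s t).trans hs.2⟩
  rw [Pi.zero_apply, dist_zero_left, Real.norm_eq_abs] at this
  exact (le_abs_self _).trans_lt this

/-- Lemma 5 of Section 4: uniform mean-square continuity on compacts.
Under (A1) and (A3), for bounded Lipschitz `g`, a compact `K ⊆ X` and `T ∈ (0,∞)`:
for every `ε > 0` there is `δ > 0` such that
`sup_{x ∈ K} ∫∫ (g(u)-g(v))² P_{|t-s|}(u,dv) P_{s∧t}(x,du) < ε` whenever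
`s,t ∈ [0,T]` and `|s - t| < δ`. -/
theorem uniform_mean_square_continuity_on_compacts
    (P : ℝ → X → Measure X) (hP : IsMarkovSemigroup P)
    (γ : ℝ) (hA1 : CondA1 P) (hA3 : CondA3 P γ)
    (g : X → ℝ) (Kg : ℝ≥0) (hLip : LipschitzWith Kg g) (hBd : ∃ C, ∀ x, |g x| ≤ C)
    (K : Set X) (hK : IsCompact K) (T : ℝ) (hT : 0 < T) :
    ∀ ε : ℝ, 0 < ε → ∃ δ : ℝ, 0 < δ ∧
      ∀ s t : ℝ, s ∈ Set.Icc (0 : ℝ) T → t ∈ Set.Icc (0 : ℝ) T → |s - t| < δ →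
        ∀ x ∈ K,
          (∫ u, (∫ v, (g u - g v) ^ 2 ∂(P |t - s| u)) ∂(P (min s t) x)) < ε :=
  uniform_mean_square_continuity_on_compacts_general P hP γ hA1 hA3 g Kg hLip hBd K hK T
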